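/- arXiv:2007.08762 — 6 statements merged into one kernel-verified Lean document; each statement's English description precedes it below -/
import Mathlib

section
/- Let r*(ψ, λ, u, c) denote the unique r > 0 satisfying r·(√(1+8r/ψ²) + √(1+8(r+λ)/ψ²)) + λ·(√(1+8r/ψ²) + 1) = 4λ·(u/c + 1). Then r* is strictly increasing in each of λ, ψ, and the ratio u/c: for all positive parameters, (i) if λ' > λ then r*(ψ, λ', u, c) > r*(ψ, λ, u, c); (ii) if ψ' > ψ then r*(ψ', λ, u, c) > r*(ψ, λ, u, c); (iii) if u'/c' > u/c then r*(ψ, λ, u', c') > r*(ψ, λ, u, c). -/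
/-- The left-hand side of the equation defining the cutoff discount rate `r*`. -/
noncomputable def cutoffLHS (ψ lam r : ℝ) : ℝ :=
  r * (Real.sqrt (1 + 8 * r / ψ ^ 2) + Real.sqrt (1 + 8 * (r + lam) / ψ ^ 2))
    + lam * (Real.sqrt (1 + 8 * r / ψ ^ 2) + 1)

/-!
Since `cutoffLHS` is strictly increasing in `r`, it suffices to compare `cutoffLHS` at the old
root with the new right-hand side. Raising `ψ` lowers `cutoffLHS` and raising `u/c` raises the
right-hand side. Raising `λ` raises both, but `cutoffLHS / λ` is strictly decreasing in `λ`
(each `√(a + b λ) / λ` is), while the right-hand side divided by `λ` is constant.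
-/

open Set Real

lemma sqrt_add_mul_div_antitoneOn {a b : ℝ} (ha : 0 ≤ a) (hb : 0 ≤ b) :
    AntitoneOn (fun x => √(a + b * x) / x) (Ioi 0) := by
  intro x hx y hy hxy
  have hx : 0 < x := hx
  have hy : 0 < y := hy
  have hxy2 : x ^ 2 ≤ y ^ 2 := by gcongr
  rw [div_le_div_iff₀ hy hx]
  calc √(a + b * y) * x = √((a + b * y) * x ^ 2) := by rw [sqrt_mul' _ (sq_nonneg x), sqrt_sq hx.le]
    _ ≤ √((a + b * x) * y ^ 2) := sqrt_le_sqrt ?_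
    _ = √(a + b * x) * y := by rw [sqrt_mul' _ (sq_nonneg y), sqrt_sq hy.le]
  have hbxy : 0 ≤ b * x * y := by positivity
  nlinarith [mul_le_mul_of_nonneg_left hxy2 ha, mul_le_mul_of_nonneg_left hxy hbxy]

lemma cutoffLHS_strictMonoOn (ψ : ℝ) {lam : ℝ} (hlam : 0 ≤ lam) :
    StrictMonoOn (cutoffLHS ψ lam) (Ici 0) := by
  intro r hr r' hr' h
  have hr : 0 ≤ r := hr
  have hr' : 0 ≤ r' := hr.trans h.le
  unfold cutoffLHS
  refine add_lt_add_of_lt_of_le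
    ((mul_le_mul_of_nonneg_left ?_ hr).trans_lt (mul_lt_mul_of_pos_right h ?_)) ?_
  · gcongr
  · exact add_pos_of_pos_of_nonneg (sqrt_pos.2 (by positivity)) (sqrt_nonneg _)
  · gcongr

lemma cutoffLHS_strictAntiOn_psi {lam r : ℝ} (hlam : 0 ≤ lam) (hr : 0 < r) :
    StrictAntiOn (fun ψ => cutoffLHS ψ lam r) (Ioi 0) := by
  intro ψ hψ ψ' hψ' h
  have hψ : 0 < ψ := hψ
  simp only [cutoffLHS]
  apply add_lt_add_of_lt_of_le <;> gcongr

lemma cutoffLHS_div_strictAntiOn_lam (ψ : ℝ) {r : ℝ} (hr : 0 < r) :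
    StrictAntiOn (fun lam => cutoffLHS ψ lam r / lam) (Ioi 0) := by
  have hsplit : ∀ lam : ℝ, 0 < lam → cutoffLHS ψ lam r / lam =
      r * √(1 + 8 * r / ψ ^ 2) / lam + r * (√((1 + 8 * r / ψ ^ 2) + 8 / ψ ^ 2 * lam) / lam)
        + √(1 + 8 * r / ψ ^ 2) + 1 := by
    intro lam hlam
    rw [cutoffLHS, show 1 + 8 * (r + lam) / ψ ^ 2 = (1 + 8 * r / ψ ^ 2) + 8 / ψ ^ 2 * lam by ring]
    field_simp
    ring
  intro lam hlam lam' hlam' h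
  have hlam : 0 < lam := hlam
  simp only [hsplit lam hlam, hsplit lam' (hlam.trans h)]
  have hfirst : r * √(1 + 8 * r / ψ ^ 2) / lam' < r * √(1 + 8 * r / ψ ^ 2) / lam :=
    div_lt_div_of_pos_left (mul_pos hr (sqrt_pos.2 (by positivity))) hlam h
  have hsecond := sqrt_add_mul_div_antitoneOn (a := 1 + 8 * r / ψ ^ 2) (b := 8 / ψ ^ 2)
    (by positivity) (by positivity) hlam (hlam.trans h) h.le
  linarith [mul_le_mul_of_nonneg_left hsecond hr.le]

/-- The cutoff discount rate `r*` (the unique positive solution of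
`cutoffLHS ψ lam r = 4·λ·(u/c + 1)`) is strictly increasing in each of λ, ψ, and u/c. -/
theorem cutoff_discount_rate_strict_mono :
    (∀ ψ lam lam' u c r r' : ℝ, 0 < ψ → 0 < lam → 0 < lam' → 0 < u → 0 < c →
      0 < r → 0 < r' →
      cutoffLHS ψ lam r = 4 * lam * (u / c + 1) →
      cutoffLHS ψ lam' r' = 4 * lam' * (u / c + 1) →
      lam < lam' → r < r') ∧
    (∀ ψ ψ' lam u c r r' : ℝ, 0 < ψ → 0 < ψ' → 0 < lam → 0 < u → 0 < c →
      0 < r → 0 < r' →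
      cutoffLHS ψ lam r = 4 * lam * (u / c + 1) →
      cutoffLHS ψ' lam r' = 4 * lam * (u / c + 1) →
      ψ < ψ' → r < r') ∧
    (∀ ψ lam u c u' c' r r' : ℝ, 0 < ψ → 0 < lam → 0 < u → 0 < c → 0 < u' → 0 < c' →
      0 < r → 0 < r' →
      cutoffLHS ψ lam r = 4 * lam * (u / c + 1) →
      cutoffLHS ψ lam r' = 4 * lam * (u' / c' + 1) →
      u / c < u' / c' → r < r') := by
  refine ⟨?_, ?_, ?_⟩
  · intro ψ lam lam' u c r r' _ hlam hlam' _ _ hr hr' hEq hEq' hlt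
    refine ((cutoffLHS_strictMonoOn ψ hlam'.le).lt_iff_lt hr.le hr'.le).1 ?_
    have hdiv : cutoffLHS ψ lam' r / lam' < cutoffLHS ψ lam' r' / lam' := calc
      cutoffLHS ψ lam' r / lam' < cutoffLHS ψ lam r / lam :=
        cutoffLHS_div_strictAntiOn_lam ψ hr hlam hlam' hlt
      _ = cutoffLHS ψ lam' r' / lam' := by
        rw [hEq, hEq']
        field_simp
    exact (div_lt_div_iff_of_pos_right hlam').1 hdiv
  · intro ψ ψ' lam u c r r' hψ hψ' hlam _ _ hr hr' hEq hEq' hlt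
    refine ((cutoffLHS_strictMonoOn ψ' hlam.le).lt_iff_lt hr.le hr'.le).1 ?_
    calc cutoffLHS ψ' lam r < cutoffLHS ψ lam r := cutoffLHS_strictAntiOn_psi hlam.le hr hψ hψ' hlt
      _ = cutoffLHS ψ' lam r' := hEq.trans hEq'.symm
  · intro ψ lam u c u' c' r r' _ hlam _ _ _ _ hr hr' hEq hEq' hlt
    refine ((cutoffLHS_strictMonoOn ψ hlam.le).lt_iff_lt hr.le hr'.le).1 ?_
    rw [hEq, hEq']
    gcongr
end

section
/- Fix λ > 0, u > 0, c > 0. For each ψ > 0, let r*(ψ) be the unique r > 0 satisfying r·(√(1+8r/ψ²) + √(1+8(r+λ)/ψ²)) + λ·(√(1+8r/ψ²) + 1) = 4λ·(u/c + 1). Then r*(ψ) converges to λ·(2u/c + 1) as ψ → ∞. -/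
open Filter Topology

lemma one_le_sqrt_one_add_div_sq {x : ℝ} (hx : 0 ≤ x) (ψ : ℝ) : 1 ≤ √(1 + x / ψ ^ 2) :=
  Real.one_le_sqrt.mpr (le_add_of_nonneg_right (by positivity))

lemma two_mul_add_le_cutoffLHS {lam r : ℝ} (hlam : 0 ≤ lam) (hr : 0 ≤ r) (ψ : ℝ) :
    2 * r + 2 * lam ≤ cutoffLHS ψ lam r := by
  have ha := one_le_sqrt_one_add_div_sq (by positivity : 0 ≤ 8 * r) ψ
  have hb := one_le_sqrt_one_add_div_sq (by positivity : 0 ≤ 8 * (r + lam)) ψ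
  rw [cutoffLHS]
  linarith [mul_le_mul_of_nonneg_left ha hr, mul_le_mul_of_nonneg_left hb hr,
    mul_le_mul_of_nonneg_left ha hlam]

lemma cutoffLHS_le_mul_sqrt {lam r M : ℝ} (hlam : 0 ≤ lam) (hr : 0 ≤ r) (hrM : r ≤ M) (ψ : ℝ) :
    cutoffLHS ψ lam r ≤ (2 * r + 2 * lam) * √(1 + 8 * (M + lam) / ψ ^ 2) := by
  have hmono : ∀ x ≤ M + lam, √(1 + 8 * x / ψ ^ 2) ≤ √(1 + 8 * (M + lam) / ψ ^ 2) :=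
    fun x hx => Real.sqrt_le_sqrt (by gcongr)
  have ha := hmono r (by linarith)
  have hb := hmono (r + lam) (by linarith)
  have hs := one_le_sqrt_one_add_div_sq (by linarith : 0 ≤ 8 * (M + lam)) ψ
  rw [cutoffLHS]
  linarith [mul_le_mul_of_nonneg_left ha hr, mul_le_mul_of_nonneg_left hb hr,
    mul_le_mul_of_nonneg_left ha hlam, mul_le_mul_of_nonneg_left hs hlam]

lemma le_of_cutoffLHS_eq {ψ lam r L : ℝ} (hlam : 0 ≤ lam) (hr : 0 ≤ r)
    (h : cutoffLHS ψ lam r = 2 * L + 2 * lam) : r ≤ L := by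
  linarith [two_mul_add_le_cutoffLHS hlam hr ψ]

lemma div_sqrt_sub_le_of_cutoffLHS_eq {ψ lam r L : ℝ} (hlam : 0 ≤ lam) (hr : 0 ≤ r)
    (h : cutoffLHS ψ lam r = 2 * L + 2 * lam) :
    (L + lam) / √(1 + 8 * (L + lam) / ψ ^ 2) - lam ≤ r := by
  have hrL := le_of_cutoffLHS_eq hlam hr h
  have hs := one_le_sqrt_one_add_div_sq (by linarith : 0 ≤ 8 * (L + lam)) ψ
  have := cutoffLHS_le_mul_sqrt hlam hr hrL ψ
  rw [sub_le_iff_le_add, div_le_iff₀ (by linarith)]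
  linarith

lemma tendsto_sqrt_one_add_div_sq_atTop (C : ℝ) :
    Tendsto (fun ψ : ℝ => √(1 + C / ψ ^ 2)) atTop (𝓝 1) := by
  have h : Tendsto (fun ψ : ℝ => C / ψ ^ 2) atTop (𝓝 0) :=
    tendsto_const_nhds.div_atTop (tendsto_pow_atTop two_ne_zero)
  simpa using (h.const_add 1).sqrt

theorem cutoff_discount_rate_tendsto_general (lam u c : ℝ)
    (hlam : 0 < lam) (rstar : ℝ → ℝ)
    (hrstar : ∀ ψ : ℝ, 0 < ψ →
      0 < rstar ψ ∧ cutoffLHS ψ lam (rstar ψ) = 4 * lam * (u / c + 1)) :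
    Filter.Tendsto rstar Filter.atTop (nhds (lam * (2 * u / c + 1))) := by
  set L := lam * (2 * u / c + 1)
  have hK : 4 * lam * (u / c + 1) = 2 * L + 2 * lam := by ring
  have hlim : Tendsto (fun ψ : ℝ => (L + lam) / √(1 + 8 * (L + lam) / ψ ^ 2) - lam)
      atTop (𝓝 L) := by
    simpa using ((tendsto_const_nhds (x := L + lam)).div
      (tendsto_sqrt_one_add_div_sq_atTop (8 * (L + lam))) one_ne_zero).sub_const lam
  have hsol : ∀ᶠ ψ in atTop, 0 < rstar ψ ∧ cutoffLHS ψ lam (rstar ψ) = 2 * L + 2 * lam :=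
    (eventually_gt_atTop 0).mono fun ψ hψ => hK ▸ hrstar ψ hψ
  exact tendsto_of_tendsto_of_tendsto_of_le_of_le' hlim tendsto_const_nhds
    (hsol.mono fun _ h => div_sqrt_sub_le_of_cutoffLHS_eq hlam.le h.1.le h.2)
    (hsol.mono fun _ h => le_of_cutoffLHS_eq hlam.le h.1.le h.2)

/-- Fix λ, u, c > 0; for each ψ > 0 let `rstar ψ` be the unique positive
solution of the cutoff equation.  Then `rstar ψ → λ·(2u/c + 1)` as ψ → ∞. -/
theorem cutoff_discount_rate_tendsto (lam u c : ℝ)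
    (hlam : 0 < lam) (hu : 0 < u) (hc : 0 < c) (rstar : ℝ → ℝ)
    (hrstar : ∀ ψ : ℝ, 0 < ψ →
      0 < rstar ψ ∧ cutoffLHS ψ lam (rstar ψ) = 4 * lam * (u / c + 1)) :
    Filter.Tendsto rstar Filter.atTop (nhds (lam * (2 * u / c + 1))) :=
  cutoff_discount_rate_tendsto_general lam u c hlam rstar hrstar
end

section
/- Let r₁, λ, ψ, u, c > 0. Let ξ_L := (−1 + √(1+8r₁/ψ²))/2 (the positive root of ξ² + ξ = 2r₁/ψ²) and ξ_R := (−1 − √(1+8(r₁+λ)/ψ²))/2 (the negative root of ξ² + ξ = 2(r₁+λ)/ψ²), and set v_L := u + c − r₁c/(ξ_L ψ²) and v_R := r₁(u+c)/(r₁+λ) − r₁c/(ξ_R ψ²). Then v_L > v_R if and only if r₁·(√(1+8r₁/ψ²) + √(1+8(r₁+λ)/ψ²)) + λ·(√(1+8r₁/ψ²) + 1) < 4λ·(u/c + 1). -/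
/-!
If `ξ = (σ - 1) / 2` with `σ ^ 2 = 1 + 8 k / ψ ^ 2`, then `ξ ^ 2 + ξ = 2 k / ψ ^ 2`, so
`k / (ξ ψ ^ 2) = (ξ + 1) / 2 = (σ + 1) / 4`. This removes the reciprocals of `ξ_L` and `ξ_R`
from `v_L` and `v_R`, and a direct computation gives
`v_L - v_R = c (4λ (u / c + 1) - r₁ (s + t) - λ (s + 1)) / (4 (r₁ + λ))`
with `s`, `t` the two square roots; its sign is the sign of the bracket.
-/

theorem div_root_mul_sq_eq {k ψ σ : ℝ} (hψ : ψ ≠ 0) (hσ : σ ^ 2 = 1 + 8 * k / ψ ^ 2)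
    (hσ1 : σ ≠ 1) : k / ((-1 + σ) / 2 * ψ ^ 2) = (σ + 1) / 4 := by
  have : -1 + σ ≠ 0 := fun h => hσ1 (by linarith)
  field_simp at hσ ⊢
  linear_combination -hσ

theorem vL_gt_vR_iff_general (r₁ lam ψ u c ξL ξR vL vR : ℝ)
    (hr : 0 < r₁) (hlam : 0 < lam) (hψ : 0 < ψ) (hc : 0 < c)
    (hξL : ξL = (-1 + Real.sqrt (1 + 8 * r₁ / ψ ^ 2)) / 2)
    (hξR : ξR = (-1 - Real.sqrt (1 + 8 * (r₁ + lam) / ψ ^ 2)) / 2)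
    (hvL : vL = u + c - r₁ * c / (ξL * ψ ^ 2))
    (hvR : vR = r₁ * (u + c) / (r₁ + lam) - r₁ * c / (ξR * ψ ^ 2)) :
    vL > vR ↔
      r₁ * (Real.sqrt (1 + 8 * r₁ / ψ ^ 2) + Real.sqrt (1 + 8 * (r₁ + lam) / ψ ^ 2))
        + lam * (Real.sqrt (1 + 8 * r₁ / ψ ^ 2) + 1) < 4 * lam * (u / c + 1) := by
  set s := Real.sqrt (1 + 8 * r₁ / ψ ^ 2)
  set t := Real.sqrt (1 + 8 * (r₁ + lam) / ψ ^ 2)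
  have hs1 : 1 < s := Real.lt_sqrt zero_le_one |>.mpr (by simp; positivity)
  have hL : r₁ / (ξL * ψ ^ 2) = (s + 1) / 4 :=
    hξL ▸ div_root_mul_sq_eq hψ.ne' (Real.sq_sqrt (by positivity)) hs1.ne'
  have hR : (r₁ + lam) / (ξR * ψ ^ 2) = (1 - t) / 4 := by
    have hneg := div_root_mul_sq_eq (σ := -t) hψ.ne'
      (by rw [neg_sq]; exact Real.sq_sqrt (by positivity))
      (by linarith [Real.sqrt_nonneg (1 + 8 * (r₁ + lam) / ψ ^ 2)])
    rw [hξR, sub_eq_add_neg, hneg]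
    ring
  have key : vL - vR = c * (4 * lam * (u / c + 1) - (r₁ * (s + t) + lam * (s + 1)))
      / (4 * (r₁ + lam)) := by
    rw [hvL, hvR, mul_div_right_comm, hL,
      show r₁ * c / (ξR * ψ ^ 2) = r₁ * c / (r₁ + lam) * ((r₁ + lam) / (ξR * ψ ^ 2)) by
        field_simp, hR]
    field_simp
    ring
  rw [gt_iff_lt, ← sub_pos, key, div_pos_iff_of_pos_right (by positivity),
    mul_pos_iff_of_pos_left hc, sub_pos]

/-- With ξ_L the positive root of ξ² + ξ = 2r₁/ψ² and ξ_R the negative root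
of ξ² + ξ = 2(r₁+λ)/ψ², and v_L, v_R the boundary values of the agent's value function,
we have v_L > v_R iff
r₁·(√(1+8r₁/ψ²) + √(1+8(r₁+λ)/ψ²)) + λ·(√(1+8r₁/ψ²) + 1) < 4λ·(u/c + 1). -/
theorem vL_gt_vR_iff (r₁ lam ψ u c ξL ξR vL vR : ℝ)
    (hr : 0 < r₁) (hlam : 0 < lam) (hψ : 0 < ψ) (hu : 0 < u) (hc : 0 < c)
    (hξL : ξL = (-1 + Real.sqrt (1 + 8 * r₁ / ψ ^ 2)) / 2)
    (hξR : ξR = (-1 - Real.sqrt (1 + 8 * (r₁ + lam) / ψ ^ 2)) / 2)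
    (hvL : vL = u + c - r₁ * c / (ξL * ψ ^ 2))
    (hvR : vR = r₁ * (u + c) / (r₁ + lam) - r₁ * c / (ξR * ψ ^ 2)) :
    vL > vR ↔
      r₁ * (Real.sqrt (1 + 8 * r₁ / ψ ^ 2) + Real.sqrt (1 + 8 * (r₁ + lam) / ψ ^ 2))
        + lam * (Real.sqrt (1 + 8 * r₁ / ψ ^ 2) + 1) < 4 * lam * (u / c + 1) :=
  vL_gt_vR_iff_general r₁ lam ψ u c ξL ξR vL vR hr hlam hψ hc hξL hξR hvL hvR
end

section
/- Let κ > 0 and u ∈ ℝ, and let z₁ < z₂ be reals. Suppose v : ℝ → ℝ is twice continuously differentiable on (z₁, z₂), v′(z) < 0 for all z ∈ (z₁, z₂), and v(z) = u + κ·(v″(z) − v′(z))/v′(z)² for all z ∈ (z₁, z₂). Then there exist constants C₁ < 0 and C₂ ∈ ℝ such that Φ((v(z) − u)/√κ) = C₁·e^{z} + C₂ for all z ∈ (z₁, z₂). -/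
/-- The standard normal density φ(x) = exp(−x²/2)/√(2π). -/
noncomputable def normPdf (x : ℝ) : ℝ := Real.exp (-(x ^ 2) / 2) / Real.sqrt (2 * Real.pi)

/-- The standard normal CDF Φ(x) = ∫_{−∞}^{x} φ(t) dt. -/
noncomputable def normCdf (x : ℝ) : ℝ := ∫ t in Set.Iic x, normPdf t

/-! With `w = (v - u) / √κ` the ODE becomes `w w'² = w'' - w'`. Since `φ'(x) = -x φ(x)`, the
function `h = Φ ∘ w` has `h' = φ(w) w'` and `h'' = φ(w) (w'' - w w'²) = h'`. Hence `h' = C₁ eᶻ`,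
where `C₁` has the sign of `v' < 0`, and `h - h'` is constant. -/

open Real Set

lemma normPdf_pos (x : ℝ) : 0 < normPdf x :=
  div_pos (exp_pos _) (sqrt_pos.2 (by positivity))

lemma continuous_normPdf : Continuous normPdf := by
  unfold normPdf
  fun_prop

lemma integrable_normPdf : MeasureTheory.Integrable normPdf := by
  have h : normPdf = fun x => exp (-(1 / 2 : ℝ) * x ^ 2) * (√(2 * π))⁻¹ := by
    funext x
    rw [normPdf, div_eq_mul_inv]
    congr 2
    ring
  rw [h]
  exact (integrable_exp_neg_mul_sq (by norm_num)).mul_const _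

lemma hasDerivAt_normPdf (x : ℝ) : HasDerivAt normPdf (-x * normPdf x) x := by
  have h := (((hasDerivAt_pow 2 x).neg.div_const 2).exp).div_const (√(2 * π))
  simp only [Pi.neg_apply] at h
  unfold normPdf
  refine h.congr_deriv ?_
  ring

lemma hasDerivAt_integral_Iic {f : ℝ → ℝ} (hf : MeasureTheory.Integrable f) (hc : Continuous f)
    (x : ℝ) : HasDerivAt (fun y => ∫ t in Iic y, f t) (f x) x := by
  have h : (fun y => ∫ t in Iic y, f t) =
      fun y => (∫ t in (0 : ℝ)..y, f t) + ∫ t in Iic 0, f t := by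
    funext y
    rw [← intervalIntegral.integral_Iic_sub_Iic hf.integrableOn hf.integrableOn]
    ring
  rw [h]
  exact (intervalIntegral.integral_hasDerivAt_right hf.intervalIntegrable
    (hc.stronglyMeasurableAtFilter _ _) hc.continuousAt).add_const _

lemma hasDerivAt_normCdf (x : ℝ) : HasDerivAt normCdf (normPdf x) x :=
  hasDerivAt_integral_Iic integrable_normPdf continuous_normPdf x

section ODE

variable {s : Set ℝ} {f g : ℝ → ℝ} {x₀ x : ℝ}

lemma eq_mul_exp_sub_of_hasDerivAt_self (hs : IsOpen s) (hs' : IsPreconnected s)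
    (hg : ∀ y ∈ s, HasDerivAt g (g y) y) (hx₀ : x₀ ∈ s) (hx : x ∈ s) :
    g x = g x₀ * exp (x - x₀) := by
  have hderiv : ∀ y ∈ s, HasDerivAt (fun t => g t * exp (-t)) 0 y := fun y hy => by
    refine ((hg y hy).mul (hasDerivAt_neg y).exp).congr_deriv ?_
    ring
  have hconst := hs.is_const_of_deriv_eq_zero hs'
    (fun y hy => (hderiv y hy).differentiableAt.differentiableWithinAt)
    (fun y hy => (hderiv y hy).deriv) hx hx₀
  calc g x = g x * exp (-x) * exp x := by
        rw [mul_assoc, ← exp_add, neg_add_cancel, exp_zero, mul_one]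
    _ = g x₀ * exp (x - x₀) := by rw [hconst, mul_assoc, ← exp_add, neg_add_eq_sub]

lemma sub_eq_sub_of_hasDerivAt_of_hasDerivAt_self (hs : IsOpen s) (hs' : IsPreconnected s)
    (hf : ∀ y ∈ s, HasDerivAt f (g y) y) (hg : ∀ y ∈ s, HasDerivAt g (g y) y)
    (hx₀ : x₀ ∈ s) (hx : x ∈ s) : f x - g x = f x₀ - g x₀ := by
  have hderiv : ∀ y ∈ s, HasDerivAt (fun t => f t - g t) 0 y := fun y hy => by
    refine ((hf y hy).sub (hg y hy)).congr_deriv ?_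
    ring
  exact hs.is_const_of_deriv_eq_zero hs'
    (fun y hy => (hderiv y hy).differentiableAt.differentiableWithinAt)
    (fun y hy => (hderiv y hy).deriv) hx hx₀

lemma exists_eq_mul_exp_add_of_hasDerivAt_self (hs : IsOpen s) (hs' : IsPreconnected s)
    (hf : ∀ y ∈ s, HasDerivAt f (g y) y) (hg : ∀ y ∈ s, HasDerivAt g (g y) y) (hx₀ : x₀ ∈ s) :
    ∃ C₂, ∀ x ∈ s, f x = g x₀ * exp (-x₀) * exp x + C₂ := by
  refine ⟨f x₀ - g x₀, fun x hx => ?_⟩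
  have hfg := sub_eq_sub_of_hasDerivAt_of_hasDerivAt_self hs hs' hf hg hx₀ hx
  rw [eq_mul_exp_sub_of_hasDerivAt_self hs hs' hg hx₀ hx, show x - x₀ = -x₀ + x by ring,
    exp_add] at hfg
  linarith

end ODE

lemma sub_div_sqrt_mul_sq_eq {κ u v v' v'' : ℝ} (hκ : 0 < κ) (hv' : v' ≠ 0)
    (hode : v = u + κ * (v'' - v') / v' ^ 2) :
    (v - u) / √κ * (v' / √κ) ^ 2 = v'' / √κ - v' / √κ := by
  have hsq : √κ ^ 2 = κ := sq_sqrt hκ.le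
  have hsκ : √κ ≠ 0 := (sqrt_pos.2 hκ).ne'
  rw [hode]
  field_simp
  rw [hsq]
  ring

lemma hasDerivAt_normPdf_comp_mul {w w' : ℝ → ℝ} {w'' x : ℝ} (hw : HasDerivAt w (w' x) x)
    (hw' : HasDerivAt w' w'' x) (hode : w x * w' x ^ 2 = w'' - w' x) :
    HasDerivAt (fun t => normPdf (w t) * w' t) (normPdf (w x) * w' x) x := by
  refine (((hasDerivAt_normPdf (w x)).comp x hw).mul hw').congr_deriv ?_
  simp only [Function.comp_apply]
  linear_combination -normPdf (w x) * hode

/-- If v is C² on (z₁,z₂), strictly decreasing (v′ < 0), and solves the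
nonlinear ODE v = u + κ·(v″ − v′)/v′², then there are constants C₁ < 0 and C₂ with
Φ((v(z) − u)/√κ) = C₁·e^z + C₂ on (z₁,z₂). -/
theorem hjb_mixing_solution (κ u z₁ z₂ : ℝ) (hκ : 0 < κ) (hz : z₁ < z₂)
    (v : ℝ → ℝ) (hv : ContDiffOn ℝ 2 v (Set.Ioo z₁ z₂))
    (hv' : ∀ z ∈ Set.Ioo z₁ z₂, deriv v z < 0)
    (hode : ∀ z ∈ Set.Ioo z₁ z₂,
      v z = u + κ * (deriv (deriv v) z - deriv v z) / (deriv v z) ^ 2) :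
    ∃ C₁ C₂ : ℝ, C₁ < 0 ∧ ∀ z ∈ Set.Ioo z₁ z₂,
      normCdf ((v z - u) / Real.sqrt κ) = C₁ * Real.exp z + C₂ := by
  set w : ℝ → ℝ := fun z => (v z - u) / √κ
  set w' : ℝ → ℝ := fun z => deriv v z / √κ
  have hvd : ∀ z ∈ Ioo z₁ z₂, HasDerivAt v (deriv v z) z := fun z hz =>
    (hv.differentiableOn (by norm_num)).hasDerivAt (isOpen_Ioo.mem_nhds hz)
  have hvdd : ∀ z ∈ Ioo z₁ z₂, HasDerivAt (deriv v) (deriv (deriv v) z) z := fun z hz =>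
    ((hv.deriv_of_isOpen (m := 1) isOpen_Ioo (by norm_num)).differentiableOn
      (by norm_num)).hasDerivAt (isOpen_Ioo.mem_nhds hz)
  have hwd : ∀ z ∈ Ioo z₁ z₂, HasDerivAt w (w' z) z := fun z hz =>
    ((hvd z hz).sub_const u).div_const _
  have hwode : ∀ z ∈ Ioo z₁ z₂, w z * w' z ^ 2 = deriv (deriv v) z / √κ - w' z := fun z hz =>
    sub_div_sqrt_mul_sq_eq hκ (hv' z hz).ne (hode z hz)
  have hhd : ∀ z ∈ Ioo z₁ z₂, HasDerivAt (fun t => normCdf (w t)) (normPdf (w z) * w' z) z :=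
    fun z hz => (hasDerivAt_normCdf (w z)).comp z (hwd z hz)
  have hh'd : ∀ z ∈ Ioo z₁ z₂,
      HasDerivAt (fun t => normPdf (w t) * w' t) (normPdf (w z) * w' z) z :=
    fun z hz => hasDerivAt_normPdf_comp_mul (hwd z hz) ((hvdd z hz).div_const _) (hwode z hz)
  have hz₀ : (z₁ + z₂) / 2 ∈ Ioo z₁ z₂ := ⟨by linarith, by linarith⟩
  obtain ⟨C₂, hC₂⟩ := exists_eq_mul_exp_add_of_hasDerivAt_self isOpen_Ioo isPreconnected_Ioo
    hhd hh'd hz₀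
  refine ⟨_, C₂, ?_, hC₂⟩
  have hw'neg : w' ((z₁ + z₂) / 2) < 0 := div_neg_of_neg_of_pos (hv' _ hz₀) (sqrt_pos.2 hκ)
  exact mul_neg_of_neg_of_pos (mul_neg_of_pos_of_neg (normPdf_pos _) hw'neg) (exp_pos _)
end

section
/- Let z₁ < z₂ be reals, let g : (z₁, z₂) → ℝ be continuous and strictly decreasing, and let a : (z₁, z₂) → ℝ be differentiable with a′(z) = 1 − a(z) − g(z) for all z ∈ (z₁, z₂). Then one of the following holds: (i) a is strictly increasing on (z₁, z₂); (ii) a is strictly decreasing on (z₁, z₂); or (iii) there exists z̃ ∈ (z₁, z₂) such that a is strictly decreasing on (z₁, z̃] and strictly increasing on [z̃, z₂). -/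
/-!
Along a solution, `a' = 1 - a - g`. If `a' x ≥ 0` and `x < y`, the function
`h t = exp t * (a t - 1 + g y)` has `h' t = exp t * (g y - g t) < 0` on `[x, y)`, so
`-exp y * a' y = h y < h x ≤ exp x * (g y - g x) < 0`. Hence `a'` is negative before the infimum
of `{a' ≥ 0}` and positive after it, which yields the three shapes.
-/

open Set Real

section DerivSign

variable {a f : ℝ → ℝ} {s : Set ℝ}

lemma strictMonoOn_of_hasDerivAt_pos (hs : Convex ℝ s) (ha : ∀ x ∈ s, HasDerivAt a (f x) x)
    (hf : ∀ x ∈ interior s, 0 < f x) : StrictMonoOn a s :=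
  strictMonoOn_of_deriv_pos hs (fun x hx => (ha x hx).continuousAt.continuousWithinAt)
    fun x hx => (ha x (interior_subset hx)).deriv ▸ hf x hx

lemma strictAntiOn_of_hasDerivAt_neg (hs : Convex ℝ s) (ha : ∀ x ∈ s, HasDerivAt a (f x) x)
    (hf : ∀ x ∈ interior s, f x < 0) : StrictAntiOn a s :=
  strictAntiOn_of_deriv_neg hs (fun x hx => (ha x hx).continuousAt.continuousWithinAt)
    fun x hx => (ha x (interior_subset hx)).deriv ▸ hf x hx

end DerivSign

lemma one_sub_sub_pos_of_nonneg {a g : ℝ → ℝ} {x y : ℝ} (hxy : x < y)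
    (hg : StrictAntiOn g (Icc x y)) (ha : ∀ z ∈ Icc x y, HasDerivAt a (1 - a z - g z) z)
    (hx : 0 ≤ 1 - a x - g x) : 0 < 1 - a y - g y := by
  have hxI : x ∈ Icc x y := left_mem_Icc.2 hxy.le
  have hyI : y ∈ Icc x y := right_mem_Icc.2 hxy.le
  set h : ℝ → ℝ := fun t => exp t * (a t - 1 + g y)
  have hderiv : ∀ t ∈ Icc x y, HasDerivAt h (exp t * (g y - g t)) t := fun t ht =>
    ((hasDerivAt_exp t).mul (((ha t ht).sub_const 1).add_const (g y))).congr_deriv (by ring)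
  have hanti : StrictAntiOn h (Icc x y) :=
    strictAntiOn_of_hasDerivAt_neg (convex_Icc x y) hderiv fun t ht => by
      rw [interior_Icc] at ht
      exact mul_neg_of_pos_of_neg (exp_pos t)
        (sub_neg.2 (hg (Ioo_subset_Icc_self ht) hyI ht.2))
  have hhxy : h y < h x := hanti hxI hyI hxy
  have hgxy : g y < g x := hg hxI hyI hxy
  have hex := exp_pos x
  have hey := exp_pos y
  simp only [h] at hhxy
  nlinarith

lemma strictMonoOn_or_strictAntiOn_or_antiOn_monoOn_of_hasDerivAt {a f : ℝ → ℝ} {z₁ z₂ : ℝ}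
    (ha : ∀ z ∈ Ioo z₁ z₂, HasDerivAt a (f z) z)
    (hf : ∀ x ∈ Ioo z₁ z₂, ∀ y ∈ Ioo z₁ z₂, x < y → 0 ≤ f x → 0 < f y) :
    StrictMonoOn a (Ioo z₁ z₂) ∨ StrictAntiOn a (Ioo z₁ z₂) ∨
      ∃ zt ∈ Ioo z₁ z₂, StrictAntiOn a (Ioc z₁ zt) ∧ StrictMonoOn a (Ico zt z₂) := by
  set S := {z ∈ Ioo z₁ z₂ | 0 ≤ f z}
  rcases S.eq_empty_or_nonempty with hS | ⟨p, hp⟩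
  · refine Or.inr (Or.inl (strictAntiOn_of_hasDerivAt_neg (convex_Ioo z₁ z₂) ha fun t ht => ?_))
    rw [interior_Ioo] at ht
    exact not_le.1 fun h => hS.subset ⟨ht, h⟩
  set zt := sInf S
  have hbdd : BddBelow S := ⟨z₁, fun s hs => hs.1.1.le⟩
  have hneg : ∀ z ∈ Ioo z₁ z₂, z < zt → f z < 0 := fun z hz hlt =>
    not_le.1 fun h => (csInf_le hbdd ⟨hz, h⟩).not_gt hlt
  have hpos : ∀ z ∈ Ioo z₁ z₂, zt < z → 0 < f z := fun z hz hlt => by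
    obtain ⟨s, hs, hsz⟩ := exists_lt_of_csInf_lt ⟨p, hp⟩ hlt
    exact hf s hs.1 z hz hsz hs.2
  rcases le_or_gt zt z₁ with hle | hlt
  · refine Or.inl (strictMonoOn_of_hasDerivAt_pos (convex_Ioo z₁ z₂) ha fun t ht => ?_)
    rw [interior_Ioo] at ht
    exact hpos t ht (hle.trans_lt ht.1)
  have hzt : zt ∈ Ioo z₁ z₂ := ⟨hlt, (csInf_le hbdd hp).trans_lt hp.1.2⟩
  refine Or.inr (Or.inr ⟨zt, hzt, ?_, ?_⟩)
  · refine strictAntiOn_of_hasDerivAt_neg (convex_Ioc z₁ zt)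
      (fun t ht => ha t ⟨ht.1, ht.2.trans_lt hzt.2⟩) fun t ht => ?_
    rw [interior_Ioc] at ht
    exact hneg t ⟨ht.1, ht.2.trans hzt.2⟩ ht.2
  · refine strictMonoOn_of_hasDerivAt_pos (convex_Ico zt z₂)
      (fun t ht => ha t ⟨hzt.1.trans_le ht.1, ht.2⟩) fun t ht => ?_
    rw [interior_Ico] at ht
    exact hpos t ⟨hzt.1.trans ht.1, ht.2⟩ ht.1

theorem shape_of_policy_general (z₁ z₂ : ℝ) (g a : ℝ → ℝ)
    (hg_anti : StrictAntiOn g (Set.Ioo z₁ z₂))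
    (ha : ∀ z ∈ Set.Ioo z₁ z₂, HasDerivAt a (1 - a z - g z) z) :
    StrictMonoOn a (Set.Ioo z₁ z₂) ∨ StrictAntiOn a (Set.Ioo z₁ z₂) ∨
      ∃ zt ∈ Set.Ioo z₁ z₂,
        StrictAntiOn a (Set.Ioc z₁ zt) ∧ StrictMonoOn a (Set.Ico zt z₂) :=
  strictMonoOn_or_strictAntiOn_or_antiOn_monoOn_of_hasDerivAt ha fun _ hx _ hy hxy hfx =>
    have hsub : Icc _ _ ⊆ Ioo z₁ z₂ := Icc_subset_Ioo hx.1 hy.2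
    one_sub_sub_pos_of_nonneg hxy (hg_anti.mono hsub) (fun z hz => ha z (hsub hz)) hfx

/-- If g is continuous and strictly decreasing on (z₁,z₂) and a satisfies
a′(z) = 1 − a(z) − g(z) there, then a is strictly increasing, strictly decreasing, or
first strictly decreasing then strictly increasing on (z₁,z₂). -/
theorem shape_of_policy (z₁ z₂ : ℝ) (hz : z₁ < z₂) (g a : ℝ → ℝ)
    (hg_cont : ContinuousOn g (Set.Ioo z₁ z₂))
    (hg_anti : StrictAntiOn g (Set.Ioo z₁ z₂))
    (ha : ∀ z ∈ Set.Ioo z₁ z₂, HasDerivAt a (1 - a z - g z) z) :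
    StrictMonoOn a (Set.Ioo z₁ z₂) ∨ StrictAntiOn a (Set.Ioo z₁ z₂) ∨
      ∃ zt ∈ Set.Ioo z₁ z₂,
        StrictAntiOn a (Set.Ioc z₁ zt) ∧ StrictMonoOn a (Set.Ico zt z₂) :=
  shape_of_policy_general z₁ z₂ g a hg_anti ha
end

section
/- Let r₁, ψ, c > 0 and u ∈ ℝ, set κ := r₁c²/(2ψ²), and let z₁ < z₂ be reals. Suppose v : ℝ → ℝ is twice continuously differentiable on (z₁, z₂), v′(z) < 0 for all z ∈ (z₁, z₂), and v(z) = u + κ·(v″(z) − v′(z))/v′(z)² for all z ∈ (z₁, z₂). Define a(z) := 1 + r₁c/(ψ²·v′(z)), p(z) := e^z/(1+e^z), and EP(z) := ψ·(1 − (1 − a(z))·p(z)). Then EP is differentiable on (z₁, z₂) and satisfies ψ − EP(z) − EP′(z)/p(z) = 2ψ·(v(z) − u)/c for all z ∈ (z₁, z₂). -/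
/-!
Writing `k = r₁c`, the expected performance is `EP = ψ + (k/ψ)·p/v'`. Since `p' = p(1 - p)`,
differentiating gives `EP'/p = (k/ψ)·((1 - p)v' - v'')/v'²`, and adding `EP - ψ = (k/ψ)·p v'/v'²`
the `p`-terms cancel: `ψ - EP - EP'/p = (k/ψ)·(v'' - v')/v'²`, which the ODE for `v` identifies
with `2ψ(v - u)/c`.
-/

open Real Set

lemma exp_div_one_add_exp_eq_sigmoid (z : ℝ) : exp z / (1 + exp z) = sigmoid z := by
  rw [sigmoid_def, exp_neg]
  field_simp
  ring

theorem ContDiffOn.hasDerivAt_deriv_of_isOpen {𝕜 F : Type*} [NontriviallyNormedField 𝕜]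
    [NormedAddCommGroup F] [NormedSpace 𝕜 F] {f : 𝕜 → F} {s : Set 𝕜} {x : 𝕜}
    (hf : ContDiffOn 𝕜 2 f s) (hs : IsOpen s) (hx : x ∈ s) :
    HasDerivAt (deriv f) (deriv (deriv f) x) x :=
  (((hf.deriv_of_isOpen hs (by norm_num : (1 : WithTop ℕ∞) + 1 ≤ 2)).differentiableOn
    one_ne_zero).differentiableAt (hs.mem_nhds hx)).hasDerivAt

theorem expected_performance_ode_general (r₁ ψ c u z₁ z₂ κ : ℝ)
    (hψ : 0 < ψ) (hc : 0 < c)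
    (hκ : κ = r₁ * c ^ 2 / (2 * ψ ^ 2))
    (v a p EP : ℝ → ℝ) (hv : ContDiffOn ℝ 2 v (Set.Ioo z₁ z₂))
    (hv' : ∀ z ∈ Set.Ioo z₁ z₂, deriv v z < 0)
    (hode : ∀ z ∈ Set.Ioo z₁ z₂,
      v z = u + κ * (deriv (deriv v) z - deriv v z) / (deriv v z) ^ 2)
    (ha : ∀ z, a z = 1 + r₁ * c / (ψ ^ 2 * deriv v z))
    (hp : ∀ z, p z = Real.exp z / (1 + Real.exp z))
    (hEP : ∀ z, EP z = ψ * (1 - (1 - a z) * p z)) :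
    DifferentiableOn ℝ EP (Set.Ioo z₁ z₂) ∧
      ∀ z ∈ Set.Ioo z₁ z₂, ψ - EP z - deriv EP z / p z = 2 * ψ * (v z - u) / c := by
  have hp_eq : p = sigmoid := funext fun z => (hp z).trans (exp_div_one_add_exp_eq_sigmoid z)
  have hEP_eq : EP = fun z => ψ + r₁ * c / ψ * (sigmoid z / deriv v z) := funext fun z => by
    rw [hEP, ha, hp_eq]
    field_simp
    ring
  have hEP_deriv : ∀ z ∈ Ioo z₁ z₂, HasDerivAt EP (r₁ * c / ψ *
      ((sigmoid z * (1 - sigmoid z) * deriv v z - sigmoid z * deriv (deriv v) z) /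
        deriv v z ^ 2)) z := fun z hz => by
    rw [hEP_eq]
    exact (((hasDerivAt_sigmoid z).div (hv.hasDerivAt_deriv_of_isOpen isOpen_Ioo hz)
      (hv' z hz).ne).const_mul _).const_add ψ
  refine ⟨fun z hz => (hEP_deriv z hz).differentiableAt.differentiableWithinAt, fun z hz => ?_⟩
  have hv'_ne := (hv' z hz).ne
  have hσ := sigmoid_pos z
  rw [(hEP_deriv z hz).deriv, hEP_eq, hode z hz, hκ, hp_eq]
  field_simp
  ring

/-- In the interior mixing region, with a(z) = 1 + r₁c/(ψ²·v′(z)),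
p(z) = e^z/(1+e^z) and EP(z) = ψ·(1 − (1 − a(z))·p(z)), the expected performance EP is
differentiable and satisfies ψ − EP(z) − EP′(z)/p(z) = 2ψ·(v(z) − u)/c. -/
theorem expected_performance_ode (r₁ ψ c u z₁ z₂ κ : ℝ)
    (hr : 0 < r₁) (hψ : 0 < ψ) (hc : 0 < c) (hz : z₁ < z₂)
    (hκ : κ = r₁ * c ^ 2 / (2 * ψ ^ 2))
    (v a p EP : ℝ → ℝ) (hv : ContDiffOn ℝ 2 v (Set.Ioo z₁ z₂))
    (hv' : ∀ z ∈ Set.Ioo z₁ z₂, deriv v z < 0)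
    (hode : ∀ z ∈ Set.Ioo z₁ z₂,
      v z = u + κ * (deriv (deriv v) z - deriv v z) / (deriv v z) ^ 2)
    (ha : ∀ z, a z = 1 + r₁ * c / (ψ ^ 2 * deriv v z))
    (hp : ∀ z, p z = Real.exp z / (1 + Real.exp z))
    (hEP : ∀ z, EP z = ψ * (1 - (1 - a z) * p z)) :
    DifferentiableOn ℝ EP (Set.Ioo z₁ z₂) ∧
      ∀ z ∈ Set.Ioo z₁ z₂, ψ - EP z - deriv EP z / p z = 2 * ψ * (v z - u) / c :=
  expected_performance_ode_general r₁ ψ c u z₁ z₂ κ hψ hc hκ v a p EP hv hv' hode ha hp hEP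
end
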